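/- arXiv:1606.02802 — 2 statements merged into one kernel-verified Lean document; each statement's English description precedes it below -/
import Mathlib

section
/- Assume lim_{n→∞} τ(n) = ∞ and p(n) < 1 for all n, let ξ(n) = max_{0≤s≤n} τ(s), and set a = liminf_{n→∞} Σ_{i=τ(n)}^{n−1} p(i). If 0 < a ≤ 1/e and limsup_{n→∞} Σ_{j=ξ(n)}^{n} p(j) Π_{i=τ(j)}^{ξ(n)−1} (1 − p(i))^{−1} > 1 − (1 − a − √(1 − 2a − a²))/2, then every solution of the equation Δx(n) + p(n) x(τ(n)) = 0 oscillates. -/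
/-!
Suppose `x` is eventually positive (the negative case follows from `x ↦ -x`); then `x` is
eventually nonincreasing. For `A < a` the sums of `p` over `[ξ k, k)` are eventually `≥ A`.
Summing the equation over `n < k ≤ m`, where `m` is the last index with `ξ m ≤ n`, upgrades an
eventual bound `D x(ξ n) ≤ x(n + 1)` to the same bound with `A² / 2 / (1 - A - D)` in place of `D`.
Iterating from `D = 0` drives `D` to the fixed point `lowerRoot A`, which tends to `lowerRoot a`
as `A ↑ a`. On the other hand `x(ξ n) ≤ x(τ j) ∏_{τ j ≤ i < ξ n} (1 - p i)`, so the equation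
bounds the limsup in the hypothesis by `1 - D`: a contradiction.
-/

/-- `ξ(n) = max_{0 ≤ s ≤ n} τ(s)` (for `n ≥ 0`). -/
noncomputable def xiMax (τ : ℤ → ℤ) (n : ℤ) : ℤ :=
  Finset.fold max (τ 0) τ (Finset.Icc 0 n)

open Finset Filter Topology

lemma sum_Ico_add_sum_Ico {α M : Type*} [LinearOrder α] [LocallyFiniteOrder α] [AddCommMonoid M]
    (f : α → M) {a b c : α} (hab : a ≤ b) (hbc : b ≤ c) :
    ∑ i ∈ Ico a b, f i + ∑ i ∈ Ico b c, f i = ∑ i ∈ Ico a c, f i := by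
  rw [← sum_union (Ico_disjoint_Ico_consecutive a b c), Ico_union_Ico_eq_Ico hab hbc]

section xiMax

variable {τ : ℤ → ℤ}

lemma le_xiMax {s n : ℤ} (hs : 0 ≤ s) (hsn : s ≤ n) : τ s ≤ xiMax τ n :=
  (le_fold_max _).2 (Or.inr ⟨s, mem_Icc.2 ⟨hs, hsn⟩, le_rfl⟩)

lemma exists_xiMax_le_apply {n : ℤ} (hn : 0 ≤ n) : ∃ s, 0 ≤ s ∧ s ≤ n ∧ xiMax τ n ≤ τ s := by
  rcases (le_fold_max _).1 (le_refl (xiMax τ n)) with h | ⟨s, hs, h⟩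
  · exact ⟨0, le_rfl, hn, h⟩
  · exact ⟨s, (mem_Icc.1 hs).1, (mem_Icc.1 hs).2, h⟩

lemma xiMax_monotone : Monotone (xiMax τ) := fun _ _ huv =>
  (fold_max_le _).2 ⟨(le_fold_max _).2 (Or.inl le_rfl),
    fun _ hs => le_xiMax (mem_Icc.1 hs).1 ((mem_Icc.1 hs).2.trans huv)⟩

lemma xiMax_le_sub_one (hτ : ∀ n : ℤ, 0 ≤ n → τ n ≤ n - 1) {n : ℤ} (hn : 0 ≤ n) :
    xiMax τ n ≤ n - 1 :=
  (fold_max_le _).2 ⟨by linarith [hτ 0 le_rfl], fun s hs => by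
    have := mem_Icc.1 hs; linarith [hτ s this.1]⟩

lemma tendsto_xiMax (hτlim : Tendsto τ atTop atTop) : Tendsto (xiMax τ) atTop atTop :=
  tendsto_atTop_mono' atTop ((eventually_ge_atTop 0).mono fun _ hn => le_xiMax hn le_rfl) hτlim

lemma exists_xiMax_le_lt_xiMax_add_one (hτ : ∀ n : ℤ, 0 ≤ n → τ n ≤ n - 1)
    (hτlim : Tendsto τ atTop atTop) {n : ℤ} (hn : 0 ≤ n) :
    ∃ m, n + 1 ≤ m ∧ xiMax τ m ≤ n ∧ n < xiMax τ (m + 1) := by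
  obtain ⟨B, hB⟩ := eventually_atTop.1 ((tendsto_xiMax hτlim).eventually_gt_atTop n)
  have hbdd : ∀ k, xiMax τ k ≤ n → k ≤ B := fun k hk => by
    by_contra! hkB; exact (hB k hkB.le).not_ge hk
  have hstart : xiMax τ (n + 1) ≤ n := by linarith [xiMax_le_sub_one hτ (by omega : 0 ≤ n + 1)]
  obtain ⟨m, hm, hmax⟩ := Int.exists_greatest_of_bdd ⟨B, hbdd⟩ ⟨n + 1, hstart⟩
  refine ⟨m, hmax _ hstart, hm, ?_⟩
  by_contra! h
  linarith [hmax _ h]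

lemma eventually_le_sum_Ico_xiMax {p : ℤ → ℝ} (hp : ∀ n : ℤ, 0 ≤ n → 0 ≤ p n)
    (hτ : ∀ n : ℤ, 0 ≤ n → τ n ≤ n - 1) (hτlim : Tendsto τ atTop atTop) {A : ℝ}
    (hA : A < liminf (fun n => ∑ i ∈ Ico (τ n) n, p i) atTop) :
    ∀ᶠ k in atTop, A ≤ ∑ i ∈ Ico (xiMax τ k) k, p i := by
  have hbdd : IsBoundedUnder (· ≥ ·) atTop fun n => ∑ i ∈ Ico (τ n) n, p i :=
    isBoundedUnder_of_eventually_ge <| (hτlim.eventually_ge_atTop 0).mono fun n hn =>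
      sum_nonneg fun i hi => hp i (hn.trans (mem_Ico.1 hi).1)
  obtain ⟨N, hN⟩ := eventually_atTop.1 (eventually_lt_of_lt_liminf hA hbdd)
  filter_upwards [(tendsto_xiMax hτlim).eventually_ge_atTop (max N 0), eventually_ge_atTop 0]
    with k hk hk0
  obtain ⟨s, hs0, hsk, hks⟩ := exists_xiMax_le_apply (τ := τ) hk0
  have hNs : N ≤ s := by linarith [hτ s hs0, le_max_left N 0]
  calc A ≤ ∑ i ∈ Ico (τ s) s, p i := (hN s hNs).le
    _ ≤ ∑ i ∈ Ico (xiMax τ k) k, p i :=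
      sum_le_sum_of_subset_of_nonneg (Ico_subset_Ico hks hsk) fun i hi _ =>
        hp i ((le_max_right N 0).trans (hk.trans (mem_Ico.1 hi).1))

end xiMax

/-- The smaller root of `D * (1 - A - D) = A ^ 2 / 2`. -/
noncomputable def lowerRoot (A : ℝ) : ℝ := (1 - A - √(1 - 2 * A - A ^ 2)) / 2

lemma continuous_lowerRoot : Continuous lowerRoot := by
  unfold lowerRoot; fun_prop

section lowerRoot

variable {A : ℝ}

lemma lowerRoot_pos (hA : 0 < A) (hΔ : 0 < 1 - 2 * A - A ^ 2) : 0 < lowerRoot A := by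
  have : √(1 - 2 * A - A ^ 2) < 1 - A :=
    (Real.sqrt_lt' (by nlinarith)).2 (by nlinarith)
  unfold lowerRoot; linarith

lemma lowerRoot_lt_one_sub_sub (hΔ : 0 < 1 - 2 * A - A ^ 2) :
    lowerRoot A < 1 - A - lowerRoot A := by
  unfold lowerRoot; linarith [Real.sqrt_pos.2 hΔ]

lemma lowerRoot_mul_one_sub_sub (hΔ : 0 ≤ 1 - 2 * A - A ^ 2) :
    lowerRoot A * (1 - A - lowerRoot A) = A ^ 2 / 2 := by
  unfold lowerRoot; linear_combination (-1 / 4 : ℝ) * Real.sq_sqrt hΔ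

lemma lowerRoot_sub_le {D : ℝ} (hΔ : 0 < 1 - 2 * A - A ^ 2) (hD : D ≤ lowerRoot A)
    (hD0 : 0 ≤ D) :
    A ^ 2 / 2 / (1 - A - D) ≤ lowerRoot A ∧
      lowerRoot A - A ^ 2 / 2 / (1 - A - D) ≤
        lowerRoot A / (1 - A - lowerRoot A) * (lowerRoot A - D) := by
  set c := lowerRoot A
  have hc : c < 1 - A - c := lowerRoot_lt_one_sub_sub hΔ
  have hc0 : 0 < 1 - A - c := by linarith
  have hD1 : 0 < 1 - A - D := by linarith
  rw [← lowerRoot_mul_one_sub_sub hΔ.le]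
  constructor
  · rw [div_le_iff₀ hD1]; nlinarith
  · have : c - c * (1 - A - c) / (1 - A - D) = c * (c - D) / (1 - A - D) := by
      field_simp; ring
    rw [this, div_mul_eq_mul_div]
    exact div_le_div_of_nonneg_left (by nlinarith) hc0 (by linarith)

lemma exists_lt_of_lowerRoot {P : ℝ → Prop} (hA : 0 < A) (hΔ : 0 < 1 - 2 * A - A ^ 2)
    (h0 : P 0) (hstep : ∀ D, 0 ≤ D → A + D < 1 → P D → P (A ^ 2 / 2 / (1 - A - D)))
    {d : ℝ} (hd : d < lowerRoot A) : ∃ D, d < D ∧ P D := by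
  set c := lowerRoot A
  have hc0 : 0 < c := lowerRoot_pos hA hΔ
  have hc : c < 1 - A - c := lowerRoot_lt_one_sub_sub hΔ
  set q := c / (1 - A - c)
  have hq0 : 0 ≤ q := div_nonneg hc0.le (by linarith)
  have hq1 : q < 1 := (div_lt_one (by linarith)).2 hc
  have hiter : ∀ j : ℕ, ∃ D, 0 ≤ D ∧ D ≤ c ∧ c - D ≤ c * q ^ j ∧ P D := by
    intro j
    induction j with
    | zero => exact ⟨0, le_rfl, hc0.le, by simp, h0⟩
    | succ j ih =>
      obtain ⟨D, hD0, hDc, hrate, hP⟩ := ih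
      obtain ⟨hle, hcontr⟩ := lowerRoot_sub_le hΔ hDc hD0
      refine ⟨_, div_nonneg (by positivity) (by linarith), hle, ?_, hstep D hD0 (by linarith) hP⟩
      calc _ ≤ q * (c - D) := hcontr
        _ ≤ q * (c * q ^ j) := mul_le_mul_of_nonneg_left hrate hq0
        _ = c * q ^ (j + 1) := by ring
  have hlim : Tendsto (fun j : ℕ => c * q ^ j) atTop (𝓝 0) := by
    simpa using (tendsto_pow_atTop_nhds_zero_of_lt_one hq0 hq1).const_mul c
  obtain ⟨j, hj⟩ := (hlim.eventually (gt_mem_nhds (sub_pos.2 hd))).exists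
  obtain ⟨D, -, -, hrate, hP⟩ := hiter j
  exact ⟨D, by linarith, hP⟩

end lowerRoot

/-- A discrete form of `∫₀^A (A - t) dt = A² / 2`. -/
lemma sq_div_two_le_sum_mul_max {p : ℤ → ℝ} {A : ℝ} {u v : ℤ} (hA : 0 ≤ A)
    (hp : ∀ i, u ≤ i → 0 ≤ p i) (huv : u ≤ v) (hsum : A ≤ ∑ i ∈ Ico u v, p i) :
    A ^ 2 / 2 ≤ ∑ k ∈ Ico u v, p k * max 0 (A - ∑ i ∈ Ico u k, p i) := by
  suffices h : ∀ w, u ≤ w → A ^ 2 / 2 - (max 0 (A - ∑ i ∈ Ico u w, p i)) ^ 2 / 2 ≤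
      ∑ k ∈ Ico u w, p k * max 0 (A - ∑ i ∈ Ico u k, p i) by
    simpa [max_eq_left (sub_nonpos.2 hsum)] using h v huv
  intro w huw
  induction w, huw using Int.leInduction with
  | base => simp [max_eq_right hA]
  | succ w huw ih =>
    rw [← sum_Ico_add_eq_sum_Ico_add_one huw, ← sum_Ico_add_eq_sum_Ico_add_one huw]
    set F := ∑ i ∈ Ico u w, p i
    have hpw : 0 ≤ p w := hp w huw
    have hβα : max 0 (A - (F + p w)) ≤ max 0 (A - F) := max_le_max le_rfl (by linarith)
    have hαβ : max 0 (A - F) ≤ max 0 (A - (F + p w)) + p w :=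
      max_le (by positivity) (by linarith [le_max_right 0 (A - (F + p w))])
    nlinarith [le_max_left 0 (A - F), le_max_left 0 (A - (F + p w))]

section Solution

variable {p : ℤ → ℝ} {τ : ℤ → ℤ} {x : ℤ → ℝ}

lemma sum_Ico_mul_eq_sub (hx : ∀ n : ℤ, 0 ≤ n → x (n + 1) - x n + p n * x (τ n) = 0)
    {u v : ℤ} (hu : 0 ≤ u) (huv : u ≤ v) :
    ∑ k ∈ Ico u v, p k * x (τ k) = x u - x v := by
  induction v, huv using Int.leInduction with
  | base => simp
  | succ v huv ih =>
    rw [← sum_Ico_add_eq_sum_Ico_add_one huv, ih]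
    linarith [hx v (hu.trans huv)]

structure PositiveRegime (τ : ℤ → ℤ) (x : ℤ → ℝ) (M K : ℤ) : Prop where
  M_nonneg : 0 ≤ M
  pos : ∀ n, M ≤ n → 0 < x n
  antitoneOn : AntitoneOn x (Set.Ici M)
  M_le_K : M ≤ K
  M_le_delay : ∀ i, K ≤ i → M ≤ τ i

lemma exists_positiveRegime (hp : ∀ n : ℤ, 0 ≤ n → 0 ≤ p n)
    (hx : ∀ n : ℤ, 0 ≤ n → x (n + 1) - x n + p n * x (τ n) = 0)
    (hτlim : Tendsto τ atTop atTop) (hpos : ∀ᶠ n in atTop, 0 < x n) :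
    ∃ M K, PositiveRegime τ x M K := by
  obtain ⟨N, hN⟩ := eventually_atTop.1 hpos
  obtain ⟨K₀, hK₀⟩ := eventually_atTop.1 (hτlim.eventually_ge_atTop (max N 0))
  set M := max K₀ (max N 0)
  obtain ⟨K₁, hK₁⟩ := eventually_atTop.1 (hτlim.eventually_ge_atTop M)
  have hM : max N 0 ≤ M := le_max_right _ _
  refine ⟨M, max K₁ M, ⟨(le_max_right N 0).trans hM, fun n hn => hN n (by omega), ?_,
    le_max_right _ _, fun i hi => hK₁ i (le_of_max_le_left hi)⟩⟩
  refine antitoneOn_of_succ_le Set.ordConnected_Ici fun n _ hn _ => ?_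
  have hn : M ≤ n := hn
  have hτn : 0 < x (τ n) := hN _ ((le_max_left N 0).trans (hK₀ n (le_of_max_le_left hn)))
  rw [Order.succ_eq_add_one]
  nlinarith [hx n (by omega), hp n (by omega)]

namespace PositiveRegime

variable {M K : ℤ}

lemma mono (h : PositiveRegime τ x M K) {K' : ℤ} (hK : K ≤ K') : PositiveRegime τ x M K' :=
  ⟨h.M_nonneg, h.pos, h.antitoneOn, h.M_le_K.trans hK, fun i hi => h.M_le_delay i (hK.trans hi)⟩

lemma le_mul_prod_one_sub (h : PositiveRegime τ x M K) (hp : ∀ n : ℤ, 0 ≤ n → 0 ≤ p n)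
    (hp1 : ∀ n : ℤ, 0 ≤ n → p n < 1) (hτ : ∀ n : ℤ, 0 ≤ n → τ n ≤ n - 1)
    (hx : ∀ n : ℤ, 0 ≤ n → x (n + 1) - x n + p n * x (τ n) = 0)
    {w z : ℤ} (hKw : K ≤ w) (hwz : w ≤ z) :
    x z ≤ x w * ∏ i ∈ Ico w z, (1 - p i) := by
  induction z, hwz using Int.leInduction with
  | base => simp
  | succ z hwz ih =>
    have hz0 : 0 ≤ z := by linarith [h.M_nonneg, h.M_le_K]
    have hMτ : M ≤ τ z := h.M_le_delay z (hKw.trans hwz)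
    have hxτ : x z ≤ x (τ z) := h.antitoneOn hMτ (by linarith [hτ z hz0] : M ≤ z)
      (by linarith [hτ z hz0])
    calc x (z + 1) ≤ x z * (1 - p z) := by nlinarith [hx z hz0, hp z hz0]
      _ ≤ x w * (∏ i ∈ Ico w z, (1 - p i)) * (1 - p z) :=
        mul_le_mul_of_nonneg_right ih (by linarith [hp1 z hz0])
      _ = x w * ∏ i ∈ Ico w (z + 1), (1 - p i) := by
        rw [mul_assoc, prod_Ico_mul_eq_prod_Ico_add_one hwz]

lemma sum_mul_le_sum_mul (h : PositiveRegime τ x M K) (hp : ∀ n : ℤ, 0 ≤ n → 0 ≤ p n)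
    {u v n : ℤ} (hKu : K ≤ u) (hvn : v ≤ n + 1) :
    (∑ i ∈ Ico u v, p i) * x (xiMax τ n) ≤ ∑ i ∈ Ico u v, p i * x (τ i) := by
  rw [sum_mul]
  refine sum_le_sum fun i hi => ?_
  obtain ⟨hui, hiv⟩ := mem_Ico.1 hi
  have hi0 : 0 ≤ i := by linarith [h.M_nonneg, h.M_le_K]
  have hMτ : M ≤ τ i := h.M_le_delay i (hKu.trans hui)
  have hτσ : τ i ≤ xiMax τ n := le_xiMax hi0 (by omega)
  exact mul_le_mul_of_nonneg_left (h.antitoneOn hMτ (hMτ.trans hτσ) hτσ) (hp i hi0)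

lemma le_at_delay (h : PositiveRegime τ x M K) (hp : ∀ n : ℤ, 0 ≤ n → 0 ≤ p n)
    (hx : ∀ n : ℤ, 0 ≤ n → x (n + 1) - x n + p n * x (τ n) = 0)
    {A : ℝ} {n k : ℤ} (hK : K ≤ xiMax τ n) (hnk : n < k) (hkn : xiMax τ k ≤ n)
    (hwin : A ≤ ∑ i ∈ Ico (xiMax τ k) k, p i) :
    x (n + 1) + max 0 (A - ∑ i ∈ Ico (n + 1) k, p i) * x (xiMax τ n) ≤ x (τ k) := by
  have hKk : K ≤ xiMax τ k := hK.trans (xiMax_monotone hnk.le)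
  have hK0 : 0 ≤ K := h.M_nonneg.trans h.M_le_K
  have hmass : max 0 (A - ∑ i ∈ Ico (n + 1) k, p i) ≤ ∑ i ∈ Ico (xiMax τ k) (n + 1), p i :=
    max_le (sum_nonneg fun i hi => hp i (by linarith [(mem_Ico.1 hi).1]))
      (by linarith [sum_Ico_add_sum_Ico p (by omega : xiMax τ k ≤ n + 1) hnk])
  have htel := sum_Ico_mul_eq_sub hx (by omega : 0 ≤ xiMax τ k) (by omega : xiMax τ k ≤ n + 1)
  have hsum := h.sum_mul_le_sum_mul hp hKk (le_refl (n + 1))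
  have hMτ : M ≤ τ k := h.M_le_delay k (by omega)
  have hxτ : x (xiMax τ k) ≤ x (τ k) :=
    h.antitoneOn hMτ (h.M_le_K.trans hKk) (le_xiMax (by omega) le_rfl)
  have hxσ : 0 < x (xiMax τ n) := h.pos _ (h.M_le_K.trans hK)
  nlinarith [mul_le_mul_of_nonneg_right hmass hxσ.le]

lemma improve_at (h : PositiveRegime τ x M K) (hp : ∀ n : ℤ, 0 ≤ n → 0 ≤ p n)
    (hτ : ∀ n : ℤ, 0 ≤ n → τ n ≤ n - 1) (hτlim : Tendsto τ atTop atTop)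
    (hx : ∀ n : ℤ, 0 ≤ n → x (n + 1) - x n + p n * x (τ n) = 0)
    {A D : ℝ} (hA : 0 ≤ A) (hD : 0 ≤ D)
    (hwin : ∀ k, K ≤ k → A ≤ ∑ i ∈ Ico (xiMax τ k) k, p i)
    (hDx : ∀ k, K ≤ k → D * x (xiMax τ k) ≤ x (k + 1))
    {n : ℤ} (hn0 : 0 ≤ n) (hK : K ≤ xiMax τ n) :
    A ^ 2 / 2 * x (xiMax τ n) ≤ (1 - A - D) * x (n + 1) := by
  -- Sum the equation over `n < k ≤ m`, `m` the last index with `ξ m ≤ n`: there `x (τ k)` is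
  -- at least `x (n + 1)` plus the mass of `[ξ k, n]` times `x (ξ n)`.
  obtain ⟨m, hnm, hσm, hσm₁⟩ := exists_xiMax_le_lt_xiMax_add_one hτ hτlim hn0
  have hKn : K ≤ n := by linarith [xiMax_le_sub_one hτ hn0]
  have hK0 : 0 ≤ K := h.M_nonneg.trans h.M_le_K
  set E := ∑ i ∈ Ico (n + 1) (m + 1), p i
  have hEA : A ≤ E :=
    (hwin (m + 1) (by omega)).trans <| sum_le_sum_of_subset_of_nonneg
      (Ico_subset_Ico (by omega) le_rfl) fun i hi _ => hp i (by linarith [(mem_Ico.1 hi).1])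
  have hG := sq_div_two_le_sum_mul_max hA (fun i hi => hp i (by omega)) (by omega) hEA
  have hτk : ∀ k ∈ Ico (n + 1) (m + 1),
      p k * x (n + 1) + p k * max 0 (A - ∑ i ∈ Ico (n + 1) k, p i) * x (xiMax τ n) ≤
        p k * x (τ k) := fun k hk => by
    obtain ⟨hnk, hkm⟩ := mem_Ico.1 hk
    have hσk : xiMax τ k ≤ n := (xiMax_monotone (by omega : k ≤ m)).trans hσm
    have := mul_le_mul_of_nonneg_left
      (h.le_at_delay hp hx hK (by omega) hσk (hwin k (by omega))) (hp k (by omega))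
    linarith
  have hsum := sum_le_sum hτk
  rw [sum_add_distrib, ← sum_mul, ← sum_mul, sum_Ico_mul_eq_sub hx (by omega) (by omega)] at hsum
  have hσmM : M ≤ xiMax τ m := h.M_le_K.trans (hK.trans (xiMax_monotone (by omega)))
  have hxm : D * x (n + 1) ≤ x (m + 1) :=
    (mul_le_mul_of_nonneg_left (h.antitoneOn hσmM (by simp only [Set.mem_Ici]; omega)
      (by omega)) hD).trans (hDx m (by omega))
  have hxσ : 0 < x (xiMax τ n) := h.pos _ (h.M_le_K.trans hK)
  have hx₁ : 0 < x (n + 1) := h.pos _ (by linarith [h.M_le_K])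
  nlinarith [mul_le_mul_of_nonneg_right hG hxσ.le, mul_le_mul_of_nonneg_right hEA hx₁.le]

lemma eventually_improve (h : PositiveRegime τ x M K) (hp : ∀ n : ℤ, 0 ≤ n → 0 ≤ p n)
    (hτ : ∀ n : ℤ, 0 ≤ n → τ n ≤ n - 1) (hτlim : Tendsto τ atTop atTop)
    (hx : ∀ n : ℤ, 0 ≤ n → x (n + 1) - x n + p n * x (τ n) = 0)
    {A D : ℝ} (hA : 0 ≤ A) (hD : 0 ≤ D) (hAD : A + D < 1)
    (hwin : ∀ᶠ k in atTop, A ≤ ∑ i ∈ Ico (xiMax τ k) k, p i)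
    (hDx : ∀ᶠ k in atTop, D * x (xiMax τ k) ≤ x (k + 1)) :
    ∀ᶠ n in atTop, A ^ 2 / 2 / (1 - A - D) * x (xiMax τ n) ≤ x (n + 1) := by
  obtain ⟨K', hK'⟩ := eventually_atTop.1 (hwin.and hDx)
  filter_upwards [(tendsto_xiMax hτlim).eventually_ge_atTop (max K K'), eventually_ge_atTop 0]
    with n hn hn0
  have := (h.mono (le_max_left K K')).improve_at hp hτ hτlim hx hA hD
    (fun k hk => (hK' k (le_of_max_le_right hk)).1)
    (fun k hk => (hK' k (le_of_max_le_right hk)).2) hn0 hn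
  rw [div_mul_eq_mul_div, div_le_iff₀ (by linarith)]
  linarith

lemma sum_le_one_sub (h : PositiveRegime τ x M K) (hp : ∀ n : ℤ, 0 ≤ n → 0 ≤ p n)
    (hp1 : ∀ n : ℤ, 0 ≤ n → p n < 1) (hτ : ∀ n : ℤ, 0 ≤ n → τ n ≤ n - 1)
    (hx : ∀ n : ℤ, 0 ≤ n → x (n + 1) - x n + p n * x (τ n) = 0)
    {D : ℝ} {n : ℤ} (hn0 : 0 ≤ n) (hK : ∀ j, xiMax τ n ≤ j → K ≤ τ j)
    (hDx : D * x (xiMax τ n) ≤ x (n + 1)) :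
    ∑ j ∈ Icc (xiMax τ n) n, p j * ∏ i ∈ Ico (τ j) (xiMax τ n), (1 - p i)⁻¹ ≤ 1 - D := by
  -- Each term is at most `p j * x (τ j) / x (ξ n)` by the decay estimate, and these sum to
  -- `(x (ξ n) - x (n + 1)) / x (ξ n)`.
  have hσn : xiMax τ n ≤ n - 1 := xiMax_le_sub_one hτ hn0
  have hKσ : K ≤ xiMax τ n := (hK n (by omega)).trans (le_xiMax hn0 le_rfl)
  have hK0 : 0 ≤ K := h.M_nonneg.trans h.M_le_K
  have hxσ : 0 < x (xiMax τ n) := h.pos _ (h.M_le_K.trans hKσ)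
  have hterm : ∀ j ∈ Icc (xiMax τ n) n,
      p j * (∏ i ∈ Ico (τ j) (xiMax τ n), (1 - p i)⁻¹) * x (xiMax τ n) ≤ p j * x (τ j) := by
    intro j hj
    obtain ⟨hσj, hjn⟩ := mem_Icc.1 hj
    have hKτ := hK j hσj
    have hprod : 0 < ∏ i ∈ Ico (τ j) (xiMax τ n), (1 - p i) :=
      prod_pos fun i hi => by linarith [hp1 i (by linarith [(mem_Ico.1 hi).1])]
    have hdecay := h.le_mul_prod_one_sub hp hp1 hτ hx hKτ
      ((le_xiMax (by omega) le_rfl).trans (xiMax_monotone hjn))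
    rw [mul_assoc]
    refine mul_le_mul_of_nonneg_left ?_ (hp j (by omega))
    rw [prod_inv_distrib, inv_mul_le_iff₀ hprod, mul_comm]
    exact hdecay
  have hsum := sum_le_sum hterm
  rw [← sum_mul, ← Ico_add_one_right_eq_Icc, sum_Ico_mul_eq_sub hx (by omega) (by omega)] at hsum
  refine le_of_mul_le_mul_right ?_ hxσ
  rw [← Ico_add_one_right_eq_Icc]
  linarith

lemma limsup_le_one_sub (h : PositiveRegime τ x M K) (hp : ∀ n : ℤ, 0 ≤ n → 0 ≤ p n)
    (hp1 : ∀ n : ℤ, 0 ≤ n → p n < 1) (hτ : ∀ n : ℤ, 0 ≤ n → τ n ≤ n - 1)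
    (hτlim : Tendsto τ atTop atTop)
    (hx : ∀ n : ℤ, 0 ≤ n → x (n + 1) - x n + p n * x (τ n) = 0)
    {D : ℝ} (hDx : ∀ᶠ n in atTop, D * x (xiMax τ n) ≤ x (n + 1)) :
    limsup (fun n => ∑ j ∈ Icc (xiMax τ n) n,
      p j * ∏ i ∈ Ico (τ j) (xiMax τ n), (1 - p i)⁻¹) atTop ≤ 1 - D := by
  obtain ⟨K₂, hK₂⟩ := eventually_atTop.1 (hτlim.eventually_ge_atTop K)
  have hev : ∀ᶠ n in atTop, 0 ≤ n ∧ ∀ j, xiMax τ n ≤ j → K ≤ τ j :=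
    (eventually_ge_atTop 0).and <| ((tendsto_xiMax hτlim).eventually_ge_atTop K₂).mono
      fun n hn j hj => hK₂ j (hn.trans hj)
  have hK0 : 0 ≤ K := h.M_nonneg.trans h.M_le_K
  refine limsup_le_of_le (isCoboundedUnder_le_of_eventually_le atTop (x := 0)
    (hev.mono fun n ⟨hn0, hK⟩ => ?_)) ((hev.and hDx).mono fun n ⟨⟨hn0, hK⟩, hD⟩ =>
      h.sum_le_one_sub hp hp1 hτ hx hn0 hK hD)
  have hσ0 : 0 ≤ xiMax τ n := hK0.trans <|
    (hK n (by linarith [xiMax_le_sub_one hτ hn0])).trans (le_xiMax hn0 le_rfl)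
  refine sum_nonneg fun j hj => mul_nonneg (hp j (by linarith [(mem_Icc.1 hj).1])) ?_
  have hτj := hK j (mem_Icc.1 hj).1
  exact prod_nonneg fun i hi =>
    inv_nonneg.2 (by linarith [hp1 i (by linarith [(mem_Ico.1 hi).1])])

end PositiveRegime

end Solution

lemma not_eventually_pos {p : ℤ → ℝ} {τ : ℤ → ℤ} {x : ℤ → ℝ} {a : ℝ}
    (hp : ∀ n : ℤ, 0 ≤ n → 0 ≤ p n) (hp1 : ∀ n : ℤ, 0 ≤ n → p n < 1)
    (hτ : ∀ n : ℤ, 0 ≤ n → τ n ≤ n - 1) (hτlim : Tendsto τ atTop atTop)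
    (ha : a = liminf (fun n : ℤ => ∑ i ∈ Ico (τ n) n, p i) atTop)
    (ha0 : 0 < a) (hΔ : 0 < 1 - 2 * a - a ^ 2)
    (hcond : 1 - lowerRoot a < limsup (fun n : ℤ =>
      ∑ j ∈ Icc (xiMax τ n) n, p j * ∏ i ∈ Ico (τ j) (xiMax τ n), (1 - p i)⁻¹) atTop)
    (hx : ∀ n : ℤ, 0 ≤ n → x (n + 1) - x n + p n * x (τ n) = 0) :
    ¬ ∀ᶠ n in atTop, 0 < x n := by
  intro hpos
  obtain ⟨M, K, h⟩ := exists_positiveRegime hp hx hτlim hpos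
  obtain ⟨A, hAL, hA0, hAa⟩ := ((((continuous_lowerRoot.tendsto a).mono_left
    nhdsWithin_le_nhds).eventually (lt_mem_nhds (sub_lt_comm.1 hcond))).and
      (Ioo_mem_nhdsLT ha0)).exists
  have hwin := eventually_le_sum_Ico_xiMax hp hτ hτlim (hAa.trans_eq ha)
  obtain ⟨D, hD, hDx⟩ := exists_lt_of_lowerRoot (P := fun D => ∀ᶠ n in atTop,
      D * x (xiMax τ n) ≤ x (n + 1)) hA0 (by nlinarith)
    ((eventually_ge_atTop M).mono fun n hn => by simpa using (h.pos (n + 1) (by omega)).le)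
    (fun D hD0 hAD hDx => h.eventually_improve hp hτ hτlim hx hA0.le hD0 hAD hwin hDx) hAL
  linarith [h.limsup_le_one_sub hp hp1 hτ hτlim hx hDx]

/-- Theorem 2.2: if `τ(n) → ∞`, `p(n) < 1` for all `n ≥ 0`,
`a = liminf_{n→∞} ∑_{i=τ(n)}^{n-1} p(i)` satisfies `0 < a ≤ 1/e`, and
`limsup_{n→∞} ∑_{j=ξ(n)}^{n} p(j) ∏_{i=τ(j)}^{ξ(n)-1} (1 - p(i))⁻¹ >
1 - (1 - a - √(1 - 2a - a²))/2`, then every solution of `Δx(n) + p(n) x(τ(n)) = 0`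
oscillates. -/
theorem stmt_14 (p : ℤ → ℝ) (τ : ℤ → ℤ)
    (hp : ∀ n : ℤ, 0 ≤ n → 0 ≤ p n)
    (hp1 : ∀ n : ℤ, 0 ≤ n → p n < 1)
    (hτ : ∀ n : ℤ, 0 ≤ n → τ n ≤ n - 1)
    (hτlim : Filter.Tendsto τ Filter.atTop Filter.atTop)
    (a : ℝ)
    (ha : a = Filter.liminf (fun n : ℤ => ∑ i ∈ Finset.Ico (τ n) n, p i) Filter.atTop)
    (ha0 : 0 < a) (ha1 : a ≤ 1 / Real.exp 1)
    (hcond : 1 - (1 - a - Real.sqrt (1 - 2 * a - a ^ 2)) / 2 <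
      Filter.limsup (fun n : ℤ =>
        ∑ j ∈ Finset.Icc (xiMax τ n) n, p j * ∏ i ∈ Finset.Ico (τ j) (xiMax τ n), (1 - p i)⁻¹)
      Filter.atTop)
    (x : ℤ → ℝ)
    (hxeq : ∀ n : ℤ, 0 ≤ n → x (n + 1) - x n + p n * x (τ n) = 0) :
    (¬ ∃ N : ℤ, ∀ n ≥ N, 0 < x n) ∧ (¬ ∃ N : ℤ, ∀ n ≥ N, x n < 0) := by
  have hΔ : 0 < 1 - 2 * a - a ^ 2 := by
    have he : 1 / Real.exp 1 < 0.37 := by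
      rw [div_lt_iff₀ (Real.exp_pos 1)]; linarith [Real.exp_one_gt_d9]
    nlinarith
  have hneg : ∀ n : ℤ, 0 ≤ n → -x (n + 1) - -x n + p n * -x (τ n) = 0 := fun n hn => by
    linarith [hxeq n hn]
  refine ⟨fun ⟨N, hN⟩ => ?_, fun ⟨N, hN⟩ => ?_⟩
  · exact not_eventually_pos hp hp1 hτ hτlim ha ha0 hΔ hcond hxeq (eventually_atTop.2 ⟨N, hN⟩)
  · exact not_eventually_pos (x := fun n => -x n) hp hp1 hτ hτlim ha ha0 hΔ hcond hneg
      (eventually_atTop.2 ⟨N, fun n hn => neg_pos.2 (hN n hn)⟩)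
end

section
/- Let p(n) = 1/2 if n is a multiple of 3 and p(n) = 3/10 otherwise, and let τ(n) = −1 if n is a multiple of 3 and τ(n) = n − 1 otherwise. Then the sequence x defined by x(−1) = −12/7 and, for k ≥ 0, x(3k) = 1, x(3k+1) = 13/7, x(3k+2) = 109/70, is a solution of Δx(n) + p(n) x(τ(n)) = 0 for all n ≥ 0 that is nonoscillatory (indeed x(n) > 0 for all n ≥ 0). -/
lemma exists_nat_eq_three_mul_add_of_nonneg {n : ℤ} (hn : 0 ≤ n) :
    ∃ k : ℕ, n = 3 * k ∨ n = 3 * k + 1 ∨ n = 3 * k + 2 := by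
  lift n to ℕ using hn
  exact ⟨n / 3, by omega⟩

/-- Example 2.2: with `p(n) = 1/2` if `3 ∣ n` and `3/10` otherwise, and
`τ(n) = -1` if `3 ∣ n` and `n - 1` otherwise, the sequence with `x(-1) = -12/7`,
`x(3k) = 1`, `x(3k+1) = 13/7`, `x(3k+2) = 109/70` (for `k ≥ 0`) is a solution of
`Δx(n) + p(n) x(τ(n)) = 0` for all `n ≥ 0` that is nonoscillatory; indeed
`x(n) > 0` for all `n ≥ 0`. -/
theorem stmt_17 (p : ℤ → ℝ) (τ : ℤ → ℤ)
    (hp : ∀ n : ℤ, p n = if (3 : ℤ) ∣ n then 1 / 2 else 3 / 10)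
    (hτ : ∀ n : ℤ, τ n = if (3 : ℤ) ∣ n then -1 else n - 1)
    (x : ℤ → ℝ)
    (hxm1 : x (-1) = -12 / 7)
    (hx : ∀ k : ℕ, x (3 * (k : ℤ)) = 1 ∧ x (3 * (k : ℤ) + 1) = 13 / 7 ∧
      x (3 * (k : ℤ) + 2) = 109 / 70) :
    (∀ n : ℤ, 0 ≤ n → x (n + 1) - x n + p n * x (τ n) = 0) ∧
    (∀ n : ℤ, 0 ≤ n → 0 < x n) ∧
    (∃ N : ℤ, ∀ n ≥ N, 0 < x n) := by
  have hpos : ∀ n : ℤ, 0 ≤ n → 0 < x n := by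
    intro n hn
    obtain ⟨k, rfl | rfl | rfl⟩ := exists_nat_eq_three_mul_add_of_nonneg hn <;>
      norm_num [hx k]
  refine ⟨fun n hn => ?_, hpos, 0, hpos⟩
  obtain ⟨k, rfl | rfl | rfl⟩ := exists_nat_eq_three_mul_add_of_nonneg hn
  · norm_num [hp, hτ, hx k, hxm1]
  · have hndvd : ¬ (3 : ℤ) ∣ 3 * k + 1 := by omega
    have hnext : (3 * k + 1 + 1 : ℤ) = 3 * k + 2 := by ring
    have hprev : (3 * k + 1 - 1 : ℤ) = 3 * k := by ring
    rw [hp, hτ, if_neg hndvd, if_neg hndvd, hnext, hprev]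
    norm_num [hx k]
  · have hndvd : ¬ (3 : ℤ) ∣ 3 * k + 2 := by omega
    have hnext : (3 * k + 2 + 1 : ℤ) = 3 * ((k + 1 : ℕ) : ℤ) := by push_cast; ring
    have hprev : (3 * k + 2 - 1 : ℤ) = 3 * k + 1 := by ring
    rw [hp, hτ, if_neg hndvd, if_neg hndvd, hnext, hprev, (hx (k + 1)).1]
    norm_num [hx k]
end
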